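/- arXiv:2409.16684 — 2 statements merged into one kernel-verified Lean document; each statement's English description precedes it below -/
import Mathlib

section
/- Under the diagonal Fisher-information abstraction, the mean squared distance between the optimal remaining-data parameters and the masked parameters is bounded as Q ≤ (1/|J|) · ( c₁ · Σ_{j∈M} 1/F_{r,j}² + c₂ · Σ_{j∉M} F_{f,j}²/(F_j² · F_{r,j}²) + c₃ ), where c₁ = max_{j∈J} b_{r,j}², c₂ = 2 · max_{j∈J} (α·b_{r,j})², and c₃ = 2 · Σ_{j∈J} (b_j − β·b_{r,j})²/F_j². (Paper's Theorem 1.) -/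
/-- **Theorem 1 (ETR paper).** Under the diagonal Fisher-information abstraction,
the mean squared distance `Q` between the optimal remaining-data parameters and the
masked parameters is bounded by
`(1/|J|) · (c₁ · Σ_{j∈M} 1/F_{r,j}² + c₂ · Σ_{j∉M} F_{f,j}²/(F_j²·F_{r,j}²) + c₃)`. -/
theorem erase_then_rectify_theorem1
    {ι : Type*} [Fintype ι] [Nonempty ι] [DecidableEq ι]
    (M : Finset ι)
    (α β : ℝ) (hα : 0 < α) (hβ : 0 < β) (hαβ : α + β = 1)
    (Ff Fr : ι → ℝ) (hFf : ∀ j, 0 ≤ Ff j) (hFr : ∀ j, 0 < Fr j)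
    (F : ι → ℝ) (hF : ∀ j, F j = α * Ff j + β * Fr j)
    (b br : ι → ℝ)
    (ωstar ωrstar ωhat : ι → ℝ)
    (hωstar : ∀ j, ωstar j = b j / F j)
    (hωrstar : ∀ j, ωrstar j = br j / Fr j)
    (hωhat : ∀ j, ωhat j = if j ∈ M then 0 else ωstar j)
    (Q c₁ c₂ c₃ : ℝ)
    (hQ : Q = (1 / (Fintype.card ι : ℝ)) * ∑ j, (ωrstar j - ωhat j) ^ 2)
    (hc₁ : c₁ = Finset.univ.sup' Finset.univ_nonempty (fun j => (br j) ^ 2))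
    (hc₂ : c₂ = 2 * Finset.univ.sup' Finset.univ_nonempty (fun j => (α * br j) ^ 2))
    (hc₃ : c₃ = 2 * ∑ j, (b j - β * br j) ^ 2 / (F j) ^ 2) :
    Q ≤ (1 / (Fintype.card ι : ℝ)) *
      (c₁ * ∑ j ∈ M, 1 / (Fr j) ^ 2 +
       c₂ * ∑ j ∈ Finset.univ \ M, (Ff j) ^ 2 / ((F j) ^ 2 * (Fr j) ^ 2) +
       c₃) := by
  have hFpos : ∀ j, 0 < F j := fun j => by
    rw [hF]; have h1 := hFf j; have h2 := hFr j; nlinarith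
  have hn : (0:ℝ) ≤ 1 / (Fintype.card ι : ℝ) := by positivity
  rw [hQ]
  apply mul_le_mul_of_nonneg_left _ hn
  rw [← Finset.sum_sdiff (Finset.subset_univ M)]
  -- Bound the masked part
  have hM : ∑ j ∈ M, (ωrstar j - ωhat j) ^ 2 ≤ c₁ * ∑ j ∈ M, 1 / (Fr j) ^ 2 := by
    rw [Finset.mul_sum]
    apply Finset.sum_le_sum
    intro j hj
    rw [hωrstar, hωhat, if_pos hj, sub_zero, div_pow, mul_one_div]
    have hb : (br j) ^ 2 ≤ c₁ := hc₁ ▸ Finset.le_sup' (fun j => (br j) ^ 2) (Finset.mem_univ j)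
    have := hFr j
    gcongr
  -- Bound the unmasked part, termwise
  have hC : ∀ j ∈ Finset.univ \ M, (ωrstar j - ωhat j) ^ 2 ≤
      c₂ * ((Ff j) ^ 2 / ((F j) ^ 2 * (Fr j) ^ 2)) + 2 * ((b j - β * br j) ^ 2 / (F j) ^ 2) := by
    intro j hj
    have hjM : j ∉ M := (Finset.mem_sdiff.mp hj).2
    rw [hωrstar, hωhat, if_neg hjM, hωstar]
    have hFne : F j ≠ 0 := (hFpos j).ne'
    have hFrne : (Fr j) ≠ 0 := (hFr j).ne'
    have key : br j / Fr j - b j / F j =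
        α * br j * Ff j / (F j * Fr j) + (β * br j - b j) / F j := by
      rw [div_sub_div _ _ hFrne hFne, div_add_div _ _ (mul_ne_zero hFne hFrne) hFne,
        div_eq_div_iff (mul_ne_zero hFrne hFne) (mul_ne_zero (mul_ne_zero hFne hFrne) hFne)]
      linear_combination (F j ^ 2 * Fr j * br j) * hF j
    rw [key]
    have hsup : (α * br j) ^ 2 ≤ c₂ / 2 := by
      rw [hc₂]
      have := Finset.le_sup' (fun j => (α * br j) ^ 2) (Finset.mem_univ j)
      linarith
    have h2 : (α * br j * Ff j / (F j * Fr j)) ^ 2 ≤ (c₂/2) * ((Ff j) ^ 2 / ((F j) ^ 2 * (Fr j) ^ 2)) := by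
      have heq : (α * br j * Ff j / (F j * Fr j)) ^ 2 =
          (α * br j) ^ 2 * ((Ff j) ^ 2 / ((F j) ^ 2 * (Fr j) ^ 2)) := by
        field_simp
      rw [heq]
      gcongr
    have h3 : ((β * br j - b j) / F j) ^ 2 = (b j - β * br j) ^ 2 / (F j) ^ 2 := by
      rw [div_pow]; ring_nf
    nlinarith [sq_nonneg (α * br j * Ff j / (F j * Fr j) - (β * br j - b j) / F j),
      sq_nonneg (α * br j * Ff j / (F j * Fr j) + (β * br j - b j) / F j), h2, h3.le, h3.ge]
  have hCsum : ∑ j ∈ Finset.univ \ M, (ωrstar j - ωhat j) ^ 2 ≤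
      c₂ * ∑ j ∈ Finset.univ \ M, (Ff j) ^ 2 / ((F j) ^ 2 * (Fr j) ^ 2) + c₃ := by
    calc ∑ j ∈ Finset.univ \ M, (ωrstar j - ωhat j) ^ 2
        ≤ ∑ j ∈ Finset.univ \ M, (c₂ * ((Ff j) ^ 2 / ((F j) ^ 2 * (Fr j) ^ 2)) +
            2 * ((b j - β * br j) ^ 2 / (F j) ^ 2)) := Finset.sum_le_sum hC
      _ = c₂ * ∑ j ∈ Finset.univ \ M, (Ff j) ^ 2 / ((F j) ^ 2 * (Fr j) ^ 2) +
            2 * ∑ j ∈ Finset.univ \ M, (b j - β * br j) ^ 2 / (F j) ^ 2 := by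
          rw [Finset.sum_add_distrib, Finset.mul_sum, Finset.mul_sum]
      _ ≤ _ := by
          gcongr
          rw [hc₃]
          have : ∑ j ∈ Finset.univ \ M, (b j - β * br j) ^ 2 / (F j) ^ 2 ≤
              ∑ j, (b j - β * br j) ^ 2 / (F j) ^ 2 := by
            apply Finset.sum_le_sum_of_subset_of_nonneg (Finset.sdiff_subset)
            intro j _ _; positivity
          linarith
  linarith
end

section
/- Under the diagonal Fisher-information abstraction, the contribution of the unmasked parameters satisfies Σ_{j∈J, j∉M} (ω*_{r,j} − ω*_j)² ≤ c₂ · Σ_{j∈J, j∉M} F_{f,j}²/(F_j²·F_{r,j}²) + c₃, where c₂ = 2 · max_{j∈J} (α·b_{r,j})² and c₃ = 2 · Σ_{j∈J} (b_j − β·b_{r,j})²/F_j². -/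
/-!
Writing `F = α F_f + β F_r`, the gap between the two optimal weights splits as
`b_r/F_r − b/F = α b_r F_f/(F F_r) + (β b_r − b)/F`. Squaring with `(x + y)² ≤ 2x² + 2y²`,
bounding `(α b_r)²` by its maximum and extending the sum of the second terms to all indices
gives the bound.
-/

open Finset

section MixtureFisher

variable {α β ff fr b br : ℝ}

lemma div_sub_div_mix_eq (hF : α * ff + β * fr ≠ 0) (hfr : fr ≠ 0) :
    br / fr - b / (α * ff + β * fr) =
      α * br * ff / ((α * ff + β * fr) * fr) + (β * br - b) / (α * ff + β * fr) := by
  rw [div_sub_div _ _ hfr hF, div_add_div _ _ (mul_ne_zero hF hfr) hF,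
    div_eq_div_iff (mul_ne_zero hfr hF) (mul_ne_zero (mul_ne_zero hF hfr) hF)]
  ring

lemma sq_div_sub_div_mix_le (hF : α * ff + β * fr ≠ 0) (hfr : fr ≠ 0) :
    (br / fr - b / (α * ff + β * fr)) ^ 2 ≤
      2 * (α * br) ^ 2 * (ff ^ 2 / ((α * ff + β * fr) ^ 2 * fr ^ 2)) +
        2 * ((b - β * br) ^ 2 / (α * ff + β * fr) ^ 2) := by
  rw [div_sub_div_mix_eq hF hfr]
  refine add_sq_le.trans_eq ?_
  rw [div_pow, div_pow, mul_pow, mul_pow, ← neg_sub b, neg_sq]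
  ring

end MixtureFisher

theorem unmasked_contribution_bound_general
    {ι : Type*} [Fintype ι] [Nonempty ι] [DecidableEq ι]
    (M : Finset ι)
    (α β : ℝ) (hα : 0 < α) (hβ : 0 < β)
    (Ff Fr : ι → ℝ) (hFf : ∀ j, 0 ≤ Ff j) (hFr : ∀ j, 0 < Fr j)
    (F : ι → ℝ) (hF : ∀ j, F j = α * Ff j + β * Fr j)
    (b br : ι → ℝ)
    (ωstar ωrstar : ι → ℝ)
    (hωstar : ∀ j, ωstar j = b j / F j)
    (hωrstar : ∀ j, ωrstar j = br j / Fr j)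
    (c₂ c₃ : ℝ)
    (hc₂ : c₂ = 2 * Finset.univ.sup' Finset.univ_nonempty (fun j => (α * br j) ^ 2))
    (hc₃ : c₃ = 2 * ∑ j, (b j - β * br j) ^ 2 / (F j) ^ 2) :
    ∑ j ∈ Finset.univ \ M, (ωrstar j - ωstar j) ^ 2 ≤
      c₂ * ∑ j ∈ Finset.univ \ M, (Ff j) ^ 2 / ((F j) ^ 2 * (Fr j) ^ 2) + c₃ := by
  set S := univ.sup' univ_nonempty (fun j => (α * br j) ^ 2)
  have pointwise (j : ι) : (ωrstar j - ωstar j) ^ 2 ≤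
      2 * S * (Ff j ^ 2 / (F j ^ 2 * Fr j ^ 2)) + 2 * ((b j - β * br j) ^ 2 / F j ^ 2) := by
    have hFj : α * Ff j + β * Fr j ≠ 0 :=
      (add_pos_of_nonneg_of_pos (mul_nonneg hα.le (hFf j)) (mul_pos hβ (hFr j))).ne'
    rw [hωrstar, hωstar, hF]
    refine (sq_div_sub_div_mix_le hFj (hFr j).ne').trans ?_
    gcongr
    exact le_sup' (fun j => (α * br j) ^ 2) (mem_univ j)
  calc ∑ j ∈ univ \ M, (ωrstar j - ωstar j) ^ 2
      ≤ 2 * S * ∑ j ∈ univ \ M, Ff j ^ 2 / (F j ^ 2 * Fr j ^ 2) +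
          2 * ∑ j ∈ univ \ M, (b j - β * br j) ^ 2 / F j ^ 2 := by
        simp only [mul_sum, ← sum_add_distrib]
        exact sum_le_sum fun j _ => pointwise j
    _ ≤ c₂ * ∑ j ∈ univ \ M, Ff j ^ 2 / (F j ^ 2 * Fr j ^ 2) + c₃ := by
        rw [hc₂, hc₃]
        gcongr
        exact sdiff_subset

/-- Bounding the unmasked contribution in the proof of Theorem 1:
`Σ_{j∉M} (ω*_{r,j} − ω*_j)² ≤ c₂ · Σ_{j∉M} F_{f,j}²/(F_j²·F_{r,j}²) + c₃`. -/
theorem unmasked_contribution_bound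
    {ι : Type*} [Fintype ι] [Nonempty ι] [DecidableEq ι]
    (M : Finset ι)
    (α β : ℝ) (hα : 0 < α) (hβ : 0 < β) (hαβ : α + β = 1)
    (Ff Fr : ι → ℝ) (hFf : ∀ j, 0 ≤ Ff j) (hFr : ∀ j, 0 < Fr j)
    (F : ι → ℝ) (hF : ∀ j, F j = α * Ff j + β * Fr j)
    (b br : ι → ℝ)
    (ωstar ωrstar : ι → ℝ)
    (hωstar : ∀ j, ωstar j = b j / F j)
    (hωrstar : ∀ j, ωrstar j = br j / Fr j)
    (c₂ c₃ : ℝ)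
    (hc₂ : c₂ = 2 * Finset.univ.sup' Finset.univ_nonempty (fun j => (α * br j) ^ 2))
    (hc₃ : c₃ = 2 * ∑ j, (b j - β * br j) ^ 2 / (F j) ^ 2) :
    ∑ j ∈ Finset.univ \ M, (ωrstar j - ωstar j) ^ 2 ≤
      c₂ * ∑ j ∈ Finset.univ \ M, (Ff j) ^ 2 / ((F j) ^ 2 * (Fr j) ^ 2) + c₃ :=
  unmasked_contribution_bound_general M α β hα hβ Ff Fr hFf hFr F hF b br ωstar ωrstar hωstar
    hωrstar c₂ c₃ hc₂ hc₃
end
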